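/- If T is a cut-triangle of an ℳ-complex K, then the two equivalence classes K^l_T and K^r_T of 2-cells do not share any 1-cells outside T, nor any 0-cells other than the vertices of (edges of) T; i.e., if two 2-cells u ∈ K^l_T and v ∈ K^r_T share a 1-cell not in T, or share a 0-cell that is not a vertex of any edge of T, then they are in the same class—contradiction. -/

import Mathlib

open scoped Classical

/-- `e` is an edge of the 2-cell `u`. -/
def edgeOf {K2 K1 : Type*} (d2 : Fin 3 → K2 → K1) (e : K1) (u : K2) : Prop :=
  ∃ i, d2 i u = e

/-- `w` is a vertex of the 2-cell `u` (a face of a face of `u`). -/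
def vertexOf {K2 K1 K0 : Type*} (d2 : Fin 3 → K2 → K1) (d1 : Fin 2 → K1 → K0)
    (w : K0) (u : K2) : Prop :=
  ∃ i j, d1 j (d2 i u) = w

/-- Two 2-cells are `w`-neighbours when they share an edge having `w` as a vertex. -/
def wNbr {K2 K1 K0 : Type*} (d2 : Fin 3 → K2 → K1) (d1 : Fin 2 → K1 → K0)
    (w : K0) (u u' : K2) : Prop :=
  ∃ e : K1, edgeOf d2 e u ∧ edgeOf d2 e u' ∧ ∃ j, d1 j e = w

/-- The (signed) incidence coefficient of the 1-cell `e` in the boundary of the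
2-cell `u`: the coefficient of `e` in `d₀u - d₁u + d₂u`. -/
noncomputable def incCoef {K2 K1 : Type*} (d2 : Fin 3 → K2 → K1) (u : K2) (e : K1) : ℤ :=
  ∑ i : Fin 3, if d2 i u = e then (if i = 1 then -1 else 1) else 0

/-- The boundary `∂₂` of a 2-chain, as a coefficient function on 1-cells. -/
noncomputable def bdry2 {K2 K1 : Type*} (d2 : Fin 3 → K2 → K1) (c : K2 →₀ ℤ) : K1 → ℤ :=
  fun e => c.sum fun u n => n * incCoef d2 u e

/-- An `ℳ`-complex: a connected Δ-complex which is (0) finite, (1) homogeneous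
2-dimensional, (2) regular, (3) with every 1-cell an edge of exactly two 2-cells,
(4) with linked links of 0-cells, and (5) orientable (its group of 2-cycles is
infinite cyclic). -/
structure MComplex (K2 K1 K0 : Type*) : Type _ where
  d2 : Fin 3 → K2 → K1
  d1 : Fin 2 → K1 → K0
  finite2 : Finite K2
  finite1 : Finite K1
  finite0 : Finite K0
  simp01 : ∀ u, d1 0 (d2 1 u) = d1 0 (d2 0 u)
  simp02 : ∀ u, d1 0 (d2 2 u) = d1 1 (d2 0 u)
  simp12 : ∀ u, d1 1 (d2 2 u) = d1 1 (d2 1 u)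
  homog1 : ∀ e : K1, ∃ u : K2, edgeOf d2 e u
  homog0 : ∀ w : K0, ∃ (e : K1) (j : Fin 2), d1 j e = w
  regular2 : ∀ u : K2, Function.Injective fun i => d2 i u
  regular1 : ∀ e : K1, d1 0 e ≠ d1 1 e
  edge_two : ∀ e : K1, ∃ u v : K2, u ≠ v ∧ edgeOf d2 e u ∧ edgeOf d2 e v ∧
      ∀ x : K2, edgeOf d2 e x → x = u ∨ x = v
  linked : ∀ (w : K0) (u u' : K2), vertexOf d2 d1 w u → vertexOf d2 d1 w u' →
      Relation.ReflTransGen (wNbr d2 d1 w) u u'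
  connected : ∀ w w' : K0, Relation.ReflTransGen
      (fun a b => ∃ e : K1, (d1 0 e = a ∧ d1 1 e = b) ∨ (d1 0 e = b ∧ d1 1 e = a)) w w'
  orientable : ∃ c : K2 →₀ ℤ, c ≠ 0 ∧ bdry2 d2 c = 0 ∧
      ∀ c' : K2 →₀ ℤ, bdry2 d2 c' = 0 → ∃ k : ℤ, c' = k • c

/-- The (signed) incidence coefficient of the 0-cell `v` in the boundary
`d₀e - d₁e` of the 1-cell `e`. -/
noncomputable def inc1 {K1 K0 : Type*} (d1 : Fin 2 → K1 → K0) (e : K1) (v : K0) : ℤ :=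
  (if d1 0 e = v then 1 else 0) - (if d1 1 e = v then 1 else 0)

/-- The three 1-cells `e 0`, `e 1`, `e 2` form a triangle:
`∂₁(e₀ - e₁ + e₂) = 0`. -/
def IsTriangle {K1 K0 : Type*} (d1 : Fin 2 → K1 → K0) (e : Fin 3 → K1) : Prop :=
  ∀ v : K0, inc1 d1 (e 0) v - inc1 d1 (e 1) v + inc1 d1 (e 2) v = 0

/-- Two 2-cells share an edge lying outside the triangle `e`. -/
def shareOut {K2 K1 : Type*} (d2 : Fin 3 → K2 → K1) (e : Fin 3 → K1) (u u' : K2) : Prop :=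
  ∃ f : K1, (∀ i, f ≠ e i) ∧ edgeOf d2 f u ∧ edgeOf d2 f u'

/-- `e` is a *cut-triangle* of the `ℳ`-complex `M`: its edges form a 1-cycle, and the
transitive closure of the relation of sharing an edge outside `e` is an equivalence
relation on the 2-cells with exactly two classes. -/
def IsCutTriangle {K2 K1 K0 : Type*} (M : MComplex K2 K1 K0) (e : Fin 3 → K1) : Prop :=
  IsTriangle M.d1 e ∧
  Equivalence (Relation.TransGen (shareOut M.d2 e)) ∧
  ∃ a b : K2, ¬ Relation.TransGen (shareOut M.d2 e) a b ∧
    ∀ u : K2, Relation.TransGen (shareOut M.d2 e) u a ∨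
      Relation.TransGen (shareOut M.d2 e) u b

section

variable {K2 K1 K0 : Type*} {d2 : Fin 3 → K2 → K1} {d1 : Fin 2 → K1 → K0} {e : Fin 3 → K1}
  {w : K0}

theorem shareOut_of_wNbr (hw : ∀ i j, d1 j (e i) ≠ w) {a b : K2} (hab : wNbr d2 d1 w a b) :
    shareOut d2 e a b := by
  obtain ⟨g, hga, hgb, j, hgw⟩ := hab
  exact ⟨g, fun i hgi => hw i j (hgi ▸ hgw), hga, hgb⟩

theorem shareOut_self_of_vertexOf (hw : ∀ i j, d1 j (e i) ≠ w) {u : K2}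
    (hu : vertexOf d2 d1 w u) : shareOut d2 e u u := by
  obtain ⟨i, j, hw'⟩ := hu
  exact shareOut_of_wNbr hw ⟨d2 i u, ⟨i, rfl⟩, ⟨i, rfl⟩, j, hw'⟩

end

/-- Linkedness gives only a reflexive-transitive chain of `w`-neighbours; prefixing the
self-loop of `u` along one of its edges through `w` makes it transitive. -/
theorem MComplex.transGen_shareOut_of_vertexOf {K2 K1 K0 : Type*} (M : MComplex K2 K1 K0)
    {e : Fin 3 → K1} {w : K0} (hw : ∀ i j, M.d1 j (e i) ≠ w) {u v : K2}
    (hu : vertexOf M.d2 M.d1 w u) (hv : vertexOf M.d2 M.d1 w v) :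
    Relation.TransGen (shareOut M.d2 e) u v :=
  (Relation.TransGen.single (shareOut_self_of_vertexOf hw hu)).trans_left
    (Relation.ReflTransGen.mono (fun _ _ => shareOut_of_wNbr hw) _ _ (M.linked w u v hu hv))

theorem cutTriangle_classes_disjoint_general {K2 K1 K0 : Type*} (M : MComplex K2 K1 K0)
    (e : Fin 3 → K1) (u v : K2)
    (hshare : (∃ f : K1, (∀ i, f ≠ e i) ∧ edgeOf M.d2 f u ∧ edgeOf M.d2 f v) ∨
      (∃ w : K0, (∀ (i : Fin 3) (j : Fin 2), M.d1 j (e i) ≠ w) ∧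
        vertexOf M.d2 M.d1 w u ∧ vertexOf M.d2 M.d1 w v)) :
    Relation.TransGen (shareOut M.d2 e) u v := by
  rcases hshare with ⟨f, hf⟩ | ⟨w, hw, hu, hv⟩
  · exact .single ⟨f, hf⟩
  · exact M.transGen_shareOut_of_vertexOf hw hu hv

/-- If `T` is a cut-triangle of an `ℳ`-complex `K`, then the two classes of 2-cells
induced by `T` share no 1-cells outside `T` and no 0-cells other than vertices of
edges of `T`: any two 2-cells sharing a 1-cell not in `T`, or a 0-cell which is not a
vertex of any edge of `T`, are equivalent (lie in the same class). -/
theorem cutTriangle_classes_disjoint {K2 K1 K0 : Type*} (M : MComplex K2 K1 K0)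
    (e : Fin 3 → K1) (h : IsCutTriangle M e) (u v : K2)
    (hshare : (∃ f : K1, (∀ i, f ≠ e i) ∧ edgeOf M.d2 f u ∧ edgeOf M.d2 f v) ∨
      (∃ w : K0, (∀ (i : Fin 3) (j : Fin 2), M.d1 j (e i) ≠ w) ∧
        vertexOf M.d2 M.d1 w u ∧ vertexOf M.d2 M.d1 w v)) :
    Relation.TransGen (shareOut M.d2 e) u v :=
  cutTriangle_classes_disjoint_general M e u v hshare
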